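/- arXiv:2008.02883 — 2 statements merged into one kernel-verified Lean document; each statement's English description precedes it below -/
import Mathlib

section
/- Let $w^\star$ be the minimizer of $\|w - v\|_2^2$ over the scaled simplex $\{w \geq 0, \sum_k w_k = z\}$ with $z > 0$, and suppose there exists $i$ with $v_i \geq v_j + z$ for all $j \neq i$. If $w^\star_j > 0$ for some $j \neq i$, then the point $\hat w$ obtained from $w^\star$ by setting $\hat w_i = w^\star_i + w^\star_j$, $\hat w_j = 0$, and $\hat w_k = w^\star_k$ otherwise, satisfies $\|\hat w - v\|_2^2 < \|w^\star - v\|_2^2$ whenever $w^\star_i < z$. -/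
/-- mass-shifting decreases the squared distance. If `w⋆` is the
minimizer over the scaled simplex, some coordinate `i` dominates (`v i ≥ v j + z`
for `j ≠ i`), and `w⋆ j > 0` for some `j ≠ i`, then moving the mass at `j` onto
`i` strictly decreases the squared Euclidean distance to `v`, provided `w⋆ i < z`. -/
theorem stmt_1 {n : ℕ} (z : ℝ) (hz : 0 < z) (v wstar : Fin n → ℝ)
    (hpos : ∀ k, 0 ≤ wstar k) (hsum : (∑ k, wstar k) = z)
    (hmin : ∀ w : Fin n → ℝ, (∀ k, 0 ≤ w k) → (∑ k, w k) = z →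
      (∑ k, (wstar k - v k) ^ 2) ≤ ∑ k, (w k - v k) ^ 2)
    (i : Fin n) (hdom : ∀ j : Fin n, j ≠ i → v j + z ≤ v i)
    (j : Fin n) (hji : j ≠ i) (hwj : 0 < wstar j) (hwi : wstar i < z) :
    (∑ k, ((fun k => if k = i then wstar i + wstar j else if k = j then 0 else wstar k) k
        - v k) ^ 2)
      < ∑ k, (wstar k - v k) ^ 2 := by
  set f : Fin n → ℝ := fun k =>
    ((if k = i then wstar i + wstar j else if k = j then 0 else wstar k) - v k) ^ 2 with hf
  set g : Fin n → ℝ := fun k => (wstar k - v k) ^ 2 with hg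
  have hiu : i ∈ Finset.univ (α := Fin n) := Finset.mem_univ i
  have hjei : j ∈ Finset.univ.erase i := Finset.mem_erase.mpr ⟨hji, Finset.mem_univ j⟩
  have split : ∀ h : Fin n → ℝ, (∑ k, h k) =
      h i + (h j + ∑ k ∈ (Finset.univ.erase i).erase j, h k) := by
    intro h
    rw [← Finset.add_sum_erase _ h hiu, ← Finset.add_sum_erase _ h hjei]
  have hcongr : ∑ k ∈ (Finset.univ.erase i).erase j, f k
      = ∑ k ∈ (Finset.univ.erase i).erase j, g k := by
    apply Finset.sum_congr rfl
    intro k hk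
    have hk1 := Finset.mem_erase.mp hk
    have hk2 := Finset.mem_erase.mp hk1.2
    simp [hf, hg, hk1.1, hk2.1]
  have key : f i + f j < g i + g j := by
    have h1 : v j + z ≤ v i := hdom j hji
    simp only [hf, hg, if_true, if_false, hji, if_neg, ite_true, ite_false]
    nlinarith [mul_pos hwj (show 0 < v i - v j - wstar i by linarith)]
  calc (∑ k, f k) = f i + (f j + ∑ k ∈ (Finset.univ.erase i).erase j, f k) := split f
    _ = f i + f j + ∑ k ∈ (Finset.univ.erase i).erase j, g k := by rw [hcongr]; ring
    _ < g i + g j + ∑ k ∈ (Finset.univ.erase i).erase j, g k := by linarith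
    _ = ∑ k, g k := by rw [split g]; ring
end

section
/- Let $H, C \in \mathbb{R}^{n \times n}$ with $C \geq 0$, $C_{ii} = 0$, $C_{ij} > 0$ for $i \neq j$, let $x \geq 0$ with $x \neq 0$, $\gamma > 0$, and $\delta > 0$. Define the smooth dual $g(\lambda) = -\lambda\delta + \gamma \sum_{i: x_i > 0} x_i \log x_i - \gamma \sum_i x_i \log \sum_j \exp(-(H_{ij} + \lambda C_{ij})/\gamma)$. Its derivative satisfies $g'(\lambda) \leq -\delta + \sum_{i} \sum_{j \neq i} x_i \exp\!\big(-(H_{ij} + \lambda C_{ij} - H_{ii})/\gamma\big) C_{ij}$ for every $\lambda \geq 0$. -/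
open Finset

/-- The smooth (entropically regularized) dual objective
`g(λ) = -λδ + γ ∑_{i : x i > 0} x i log x i
        - γ ∑ i x i log ∑ j exp(-(H i j + λ C i j)/γ)`. -/
noncomputable def smoothDual {n : ℕ} (H C : Matrix (Fin n) (Fin n) ℝ)
    (x : Fin n → ℝ) (δ γ : ℝ) (lam : ℝ) : ℝ :=
  -(lam * δ) + γ * ∑ i ∈ Finset.univ.filter (fun i => 0 < x i), x i * Real.log (x i)
    - γ * ∑ i, x i * Real.log (∑ j, Real.exp (-(H i j + lam * C i j) / γ))

/-!
Differentiating the log-sum-exp term, `g'(λ) = -δ + ∑ i, x i * ⟨C i⟩_λ`, where `⟨C i⟩_λ` is the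
mean of the row `C i` under the Gibbs weights `w j = exp (-(H i j + λ C i j) / γ)`. Dividing
numerator and denominator by `w i` and using `C i i = 0`, the denominator becomes
`1 + ∑_{j ≠ i} w j / w i ≥ 1`; dropping it gives the bound.
-/

section

variable {ι : Type*} [Fintype ι]

theorem hasDerivAt_log_sum_exp [Nonempty ι] {f : ι → ℝ → ℝ} {f' : ι → ℝ} {t : ℝ}
    (hf : ∀ j, HasDerivAt (f j) (f' j) t) :
    HasDerivAt (fun s => Real.log (∑ j, Real.exp (f j s)))
      ((∑ j, Real.exp (f j t) * f' j) / ∑ j, Real.exp (f j t)) t := by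
  have hsum : HasDerivAt (fun s => ∑ j, Real.exp (f j s)) (∑ j, Real.exp (f j t) * f' j) t :=
    HasDerivAt.fun_sum fun j _ => (hf j).exp
  exact hsum.log (Finset.sum_pos (fun j _ => Real.exp_pos _) univ_nonempty).ne'

theorem sum_mul_div_sum_le_sum_erase [DecidableEq ι] {w b : ι → ℝ} {k : ι}
    (hw : ∀ j, 0 ≤ w j) (hwk : 0 < w k) (hb : ∀ j, 0 ≤ b j) (hbk : b k = 0) :
    (∑ j, w j * b j) / ∑ j, w j ≤ ∑ j ∈ univ.erase k, w j / w k * b j := by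
  have hwk_le : w k ≤ ∑ j, w j := single_le_sum (fun j _ => hw j) (mem_univ k)
  calc (∑ j, w j * b j) / ∑ j, w j
      ≤ (∑ j, w j * b j) / w k :=
        div_le_div_of_nonneg_left (sum_nonneg fun j _ => mul_nonneg (hw j) (hb j)) hwk hwk_le
    _ = ∑ j, w j / w k * b j := by
        rw [sum_div]
        exact sum_congr rfl fun j _ => by ring
    _ = ∑ j ∈ univ.erase k, w j / w k * b j := (sum_erase _ (by simp [hbk])).symm

end

theorem hasDerivAt_smoothDual {n : ℕ} (H C : Matrix (Fin n) (Fin n) ℝ) (x : Fin n → ℝ)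
    {γ : ℝ} (hγ : γ ≠ 0) (δ lam : ℝ) :
    HasDerivAt (smoothDual H C x δ γ)
      (-δ + ∑ i, x i * ((∑ j, Real.exp (-(H i j + lam * C i j) / γ) * C i j) /
        ∑ j, Real.exp (-(H i j + lam * C i j) / γ))) lam := by
  have hrow : ∀ i, HasDerivAt (fun l => Real.log (∑ j, Real.exp (-(H i j + l * C i j) / γ)))
      ((∑ j, Real.exp (-(H i j + lam * C i j) / γ) * (-C i j / γ)) /
        ∑ j, Real.exp (-(H i j + lam * C i j) / γ)) lam := by
    intro i
    have : Nonempty (Fin n) := ⟨i⟩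
    refine hasDerivAt_log_sum_exp fun j => ?_
    simpa using ((((hasDerivAt_id lam).mul_const (C i j)).const_add (H i j)).neg).div_const γ
  have hlin : HasDerivAt (fun l : ℝ => -(l * δ)) (-δ) lam := by
    simpa using ((hasDerivAt_id lam).mul_const δ).fun_neg
  refine ((hlin.add_const _).sub
    ((HasDerivAt.fun_sum fun i _ => (hrow i).const_mul (x i)).const_mul γ)).congr_deriv ?_
  rw [sub_eq_add_neg, mul_sum, ← sum_neg_distrib]
  congr 1
  refine sum_congr rfl fun i _ => ?_
  simp only [mul_neg, mul_div_assoc', ← sum_div, sum_neg_distrib]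
  field_simp

theorem stmt_12_general {n : ℕ} (H C : Matrix (Fin n) (Fin n) ℝ)
    (hC0 : ∀ i j, 0 ≤ C i j) (hCd : ∀ i, C i i = 0)
    (x : Fin n → ℝ) (hx : ∀ i, 0 ≤ x i)
    (γ : ℝ) (hγ : 0 < γ) (δ : ℝ) (lam : ℝ) :
    deriv (smoothDual H C x δ γ) lam
      ≤ -δ + ∑ i, ∑ j ∈ Finset.univ.erase i,
          x i * Real.exp (-(H i j + lam * C i j - H i i) / γ) * C i j := by
  rw [(hasDerivAt_smoothDual H C x hγ.ne' δ lam).deriv]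
  gcongr with i
  have hratio : ∀ j, Real.exp (-(H i j + lam * C i j) / γ) / Real.exp (-(H i i + lam * C i i) / γ)
      = Real.exp (-(H i j + lam * C i j - H i i) / γ) := by
    intro j
    rw [← Real.exp_sub, hCd i]
    ring_nf
  calc x i * ((∑ j, Real.exp (-(H i j + lam * C i j) / γ) * C i j) /
        ∑ j, Real.exp (-(H i j + lam * C i j) / γ))
      ≤ x i * ∑ j ∈ univ.erase i, Real.exp (-(H i j + lam * C i j - H i i) / γ) * C i j := by
        gcongr
        · exact hx i
        simp_rw [← hratio]
        exact sum_mul_div_sum_le_sum_erase (fun j => (Real.exp_pos _).le) (Real.exp_pos _)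
          (hC0 i) (hCd i)
    _ = ∑ j ∈ univ.erase i, x i * Real.exp (-(H i j + lam * C i j - H i i) / γ) * C i j := by
        rw [mul_sum]
        exact sum_congr rfl fun j _ => by ring

/-- derivative bound for the smooth dual:
`g'(λ) ≤ -δ + ∑ i ∑_{j ≠ i} x i exp(-(H i j + λ C i j - H i i)/γ) C i j`. -/
theorem stmt_12 {n : ℕ} (H C : Matrix (Fin n) (Fin n) ℝ)
    (hC0 : ∀ i j, 0 ≤ C i j) (hCd : ∀ i, C i i = 0)
    (hCo : ∀ i j : Fin n, i ≠ j → 0 < C i j)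
    (x : Fin n → ℝ) (hx : ∀ i, 0 ≤ x i) (hxne : x ≠ 0)
    (γ : ℝ) (hγ : 0 < γ) (δ : ℝ) (hδ : 0 < δ) (lam : ℝ) (hlam : 0 ≤ lam) :
    deriv (smoothDual H C x δ γ) lam
      ≤ -δ + ∑ i, ∑ j ∈ Finset.univ.erase i,
          x i * Real.exp (-(H i j + lam * C i j - H i i) / γ) * C i j :=
  stmt_12_general H C hC0 hCd x hx γ hγ δ lam
end
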